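/- Let f = Σ_{k≥0} f_k be the decomposition of a holomorphic function on a bounded symmetric domain D into homogeneous polynomials of degree k, obtained from an orthogonal expansion in A²_β. Suppose for two parameters β, γ there exist C₀ and N₀ such that ‖ψ_m‖_{A²_γ}/‖ψ_m‖_{A²_β} ≤ C₀(1+|m|)^{N₀} for all monomial multi-indices m, and dim P_k ≤ A(1+k)^{N₃}. Then for every f ∈ A²_β there exist C and N with ‖f_k‖_{A²_γ} ≤ C(1+k)^N·‖f‖_{A²_β}; in particular A²_β ⊆ S*_γ, the space of holomorphic functions with moderately growing coefficients. -/
import Mathlib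


/-- Coefficient growth estimate: if `c m = ⟨f, ψ_m⟩_β` are the coefficients of
`f ∈ A²_β` in the orthonormal monomial basis `(ψ_m)` of `A²_β`, `r m = ‖ψ_m‖_{A²_γ}`
satisfies `r m ≤ C₀ (1+|m|)^{N₀}`, and the number of monomials of degree `k`
(`= dim P_k`) is at most `A (1+k)^{N₃}`, then the `A²_γ`-norms of the homogeneous
components satisfy `‖f_k‖_{A²_γ} ≤ Σ_{|m|=k} r m ‖c m‖ ≤ C (1+k)^N ‖f‖_{A²_β}`;
in particular every `f ∈ A²_β` lies in `S*_γ`. -/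
theorem homogeneous_component_growth
    (n : ℕ)
    (r : (Fin n → ℕ) → ℝ) (hr : ∀ m, 0 ≤ r m)
    (C₀ : ℝ) (N₀ : ℕ)
    (hratio : ∀ m : Fin n → ℕ, r m ≤ C₀ * ((1 : ℝ) + (∑ i, m i)) ^ N₀)
    (A : ℝ) (N₃ : ℕ)
    (hcard : ∀ k : ℕ,
      (Nat.card {m : Fin n → ℕ // ∑ i, m i = k} : ℝ) ≤ A * ((1 : ℝ) + k) ^ N₃)
    (c : (Fin n → ℕ) → ℂ) (hc : Summable fun m => ‖c m‖ ^ 2) :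
    ∃ (C : ℝ) (N : ℕ), ∀ k : ℕ,
      ∑' m : {m : Fin n → ℕ // ∑ i, m i = k}, r m.1 * ‖c m.1‖ ≤
        C * ((1 : ℝ) + k) ^ N * Real.sqrt (∑' m, ‖c m‖ ^ 2) := by
  refine ⟨|A| * |C₀|, N₃ + N₀, fun k => ?_⟩
  haveI hfin : Finite {m : Fin n → ℕ // ∑ i, m i = k} := by
    have hs : {m : Fin n → ℕ | ∑ i, m i = k}.Finite :=
      Set.Finite.ofFinset (Finset.Nat.antidiagonalTuple n k)
        (by simp [Finset.Nat.mem_antidiagonalTuple, Set.mem_setOf_eq])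
    exact hs.to_subtype
  haveI : Fintype {m : Fin n → ℕ // ∑ i, m i = k} := Fintype.ofFinite _
  set S : ℝ := ∑' m, ‖c m‖ ^ 2 with hS
  have hSnn : 0 ≤ Real.sqrt S := Real.sqrt_nonneg _
  have hk1 : (0:ℝ) ≤ (1 : ℝ) + k := by positivity
  have hbound : ∀ m : {m : Fin n → ℕ // ∑ i, m i = k},
      r m.1 * ‖c m.1‖ ≤ (|C₀| * ((1:ℝ) + k) ^ N₀) * Real.sqrt S := by
    intro m
    have h1 : r m.1 ≤ |C₀| * ((1:ℝ) + k) ^ N₀ := by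
      calc r m.1 ≤ C₀ * ((1 : ℝ) + (∑ i, m.1 i)) ^ N₀ := hratio m.1
        _ = C₀ * ((1:ℝ) + k) ^ N₀ := by rw [m.2]
        _ ≤ |C₀| * ((1:ℝ) + k) ^ N₀ := by
            apply mul_le_mul_of_nonneg_right (le_abs_self _) (by positivity)
    have h2 : ‖c m.1‖ ≤ Real.sqrt S := by
      have hle : ‖c m.1‖ ^ 2 ≤ S := Summable.le_tsum hc m.1 (fun j _ => sq_nonneg _)
      have := Real.sqrt_le_sqrt hle
      rwa [Real.sqrt_sq (norm_nonneg _)] at this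
    exact mul_le_mul h1 h2 (norm_nonneg _) (by positivity)
  calc ∑' m : {m : Fin n → ℕ // ∑ i, m i = k}, r m.1 * ‖c m.1‖
      = ∑ m : {m : Fin n → ℕ // ∑ i, m i = k}, r m.1 * ‖c m.1‖ := tsum_fintype _
    _ ≤ ∑ _m : {m : Fin n → ℕ // ∑ i, m i = k},
          (|C₀| * ((1:ℝ) + k) ^ N₀) * Real.sqrt S :=
        Finset.sum_le_sum (fun m _ => hbound m)
    _ = (Nat.card {m : Fin n → ℕ // ∑ i, m i = k} : ℝ) *
          ((|C₀| * ((1:ℝ) + k) ^ N₀) * Real.sqrt S) := by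
        rw [Finset.sum_const, Nat.card_eq_fintype_card]
        simp [nsmul_eq_mul, Finset.card_univ]
    _ ≤ (|A| * ((1:ℝ) + k) ^ N₃) * ((|C₀| * ((1:ℝ) + k) ^ N₀) * Real.sqrt S) := by
        apply mul_le_mul_of_nonneg_right _ (by positivity)
        calc (Nat.card {m : Fin n → ℕ // ∑ i, m i = k} : ℝ)
            ≤ A * ((1:ℝ) + k) ^ N₃ := hcard k
          _ ≤ |A| * ((1:ℝ) + k) ^ N₃ :=
              mul_le_mul_of_nonneg_right (le_abs_self _) (by positivity)
    _ = |A| * |C₀| * ((1:ℝ) + k) ^ (N₃ + N₀) * Real.sqrt S := by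
        rw [pow_add]; ring
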